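/- Let (c_i)_{i≥1} be the real sequence with c₁ = 1/4, c₂ = 1/6, c₃ = −1/12 satisfying c_i = c_{i−1} − c_{i−2} + (1/3)c_{i−3} for i ≥ 4, and set β_i := (i+1)·c_i. Then for every x ∈ [0,1] the series Σ_{i=1}^∞ β_i x^i converges absolutely, and its sum equals q(x) = (3/2)·x(3 − x(3 − x)) / (3 − x(3 − x(3 − x)))². -/

import Mathlib

/-!
Shifting indices, `u n := c (n + 1)` satisfies `3 u (n+3) - 3 u (n+2) + 3 u (n+1) - u n = 0`,
whose characteristic roots all have modulus below `9/10`. A quadratic Lyapunov form contracting by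
`(9/10)^2` along the recurrence shows `u n = O((9/10)^n)`, hence the absolute convergence.
The sequence `(n + 2) u n` is annihilated by the square of the recurrence, so multiplying its power
series by the reversed squared characteristic polynomial `(3 - 3x + 3x² - x³)²` leaves only the
terms fixed by the initial values; they sum to `(3/2)(3 - 3x + x²)`.
-/

open Filter Asymptotics Finset

theorem tsum_mul_eq_of_linear_recurrence {R : Type*} [CommRing R] [TopologicalSpace R]
    [IsTopologicalRing R] [T2Space R] {k : ℕ} (e : Fin (k + 1) → R) {b : ℕ → R}
    (hb : ∀ n, ∑ j, e j * b (n + j) = 0) {x : R} (hs : Summable fun i => b i * x ^ i) :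
    (∑ j, e j * x ^ (k - j)) * ∑' i, b i * x ^ i
      = ∑ j, e j * x ^ (k - j) * ∑ i ∈ range j, b i * x ^ i := by
  have hshift (j : ℕ) :
      ∑' n, b (n + j) * x ^ (n + j) = ∑' i, b i * x ^ i - ∑ i ∈ range j, b i * x ^ i :=
    eq_sub_of_add_eq' (hs.sum_add_tsum_nat_add j)
  have hterm (n : ℕ) :
      ∑ j, e j * x ^ (k - j) * (b (n + j) * x ^ (n + j)) = x ^ (n + k) * ∑ j, e j * b (n + j) := by
    rw [mul_sum]
    refine sum_congr rfl fun j _ => ?_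
    have hpow : x ^ (k - j) * x ^ (n + j) = x ^ (n + k) := by
      rw [← pow_add]
      congr 1
      omega
    linear_combination (e j * b (n + j)) * hpow
  have hsum : ∑ j, e j * x ^ (k - j) * ∑' n, b (n + j) * x ^ (n + j) = 0 := by
    have hs' (j : ℕ) : Summable fun n => b (n + j) * x ^ (n + j) := (summable_nat_add_iff j).2 hs
    simp_rw [← (hs' _).tsum_mul_left]
    rw [← Summable.tsum_finsetSum fun (j : Fin (k + 1)) _ =>
      (hs' j).mul_left (e j * x ^ (k - j))]
    simp [hterm, hb]
  simp_rw [hshift, mul_sub, sum_sub_distrib, ← sum_mul] at hsum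
  exact sub_eq_zero.mp hsum

namespace BakSneppen4

/-- A positive definite form with `Q(A v) ≤ (9/10)^2 Q(v)` for the companion matrix `A` of
`u (m+3) = u (m+2) - u (m+1) + u m / 3`, whose spectral radius is about `0.868`. -/
noncomputable def lyapunovForm (p q r : ℝ) : ℝ :=
  699 / 20 * p ^ 2 + 2387 / 60 * q ^ 2 + 29 / 5 * r ^ 2
    - 1417 / 30 * p * q + 28 / 3 * p * r - 374 / 15 * q * r

theorem sq_le_lyapunovForm (p q r : ℝ) : r ^ 2 ≤ lyapunovForm p q r := by
  unfold lyapunovForm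
  nlinarith [sq_nonneg (2097 * p - 1417 * q + 280 * r), sq_nonneg (1498825 * q - 585898 * r),
    sq_nonneg r]

theorem lyapunovForm_shift_le (p q r : ℝ) :
    lyapunovForm (p - q + 1 / 3 * r) p q ≤ 81 / 100 * lyapunovForm p q r := by
  unfold lyapunovForm
  nlinarith [sq_nonneg (p + q), sq_nonneg (p + r), sq_nonneg (q - r), sq_nonneg p,
    sq_nonneg q, sq_nonneg r]

variable {u : ℕ → ℝ}

theorem lyapunovForm_le (hu : ∀ m, u (m + 3) = u (m + 2) - u (m + 1) + 1 / 3 * u m) (m : ℕ) :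
    lyapunovForm (u (m + 2)) (u (m + 1)) (u m)
      ≤ lyapunovForm (u 2) (u 1) (u 0) * (81 / 100) ^ m := by
  induction m with
  | zero => simp
  | succ m ih =>
    calc lyapunovForm (u (m + 3)) (u (m + 2)) (u (m + 1))
        ≤ 81 / 100 * lyapunovForm (u (m + 2)) (u (m + 1)) (u m) := by
          rw [hu m]
          exact lyapunovForm_shift_le _ _ _
      _ ≤ 81 / 100 * (lyapunovForm (u 2) (u 1) (u 0) * (81 / 100) ^ m) := by gcongr
      _ = lyapunovForm (u 2) (u 1) (u 0) * (81 / 100) ^ (m + 1) := by ring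

theorem isBigO_pow (hu : ∀ m, u (m + 3) = u (m + 2) - u (m + 1) + 1 / 3 * u m) :
    u =O[atTop] fun n => (9 / 10 : ℝ) ^ n := by
  refine IsBigO.of_pow two_ne_zero (IsBigO.of_bound (lyapunovForm (u 2) (u 1) (u 0)) ?_)
  refine Eventually.of_forall fun n => ?_
  have hsq : ((9 / 10 : ℝ) ^ n) ^ 2 = (81 / 100) ^ n := by
    rw [← pow_mul, mul_comm, pow_mul]
    norm_num
  simp only [Pi.pow_apply, Real.norm_eq_abs, abs_pow, sq_abs, hsq]
  rw [abs_of_pos (by positivity)]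
  exact (sq_le_lyapunovForm _ _ _).trans (lyapunovForm_le hu n)

theorem summable_abs_natCast_add_mul
    (hu : ∀ m, u (m + 3) = u (m + 2) - u (m + 1) + 1 / 3 * u m) (a : ℝ) :
    Summable fun n : ℕ => |((n : ℝ) + a) * u n| := by
  have hr : ‖(9 / 10 : ℝ)‖ < 1 := by norm_num
  have hgeom : Summable fun n : ℕ => ((n : ℝ) + a) * (9 / 10 : ℝ) ^ n := by
    simpa [add_mul] using
      ((summable_pow_mul_geometric_of_norm_lt_one 1 hr).add
        ((summable_geometric_of_norm_lt_one hr).mul_left a))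
  exact (summable_of_isBigO_nat hgeom ((isBigO_refl _ _).mul (isBigO_pow hu))).abs

/-- `1, -6, 15, -24, 27, -18, 9` are the coefficients of `(3t³ - 3t² + 3t - 1)²`. -/
theorem natCast_add_mul_recurrence
    (hu : ∀ m, u (m + 3) = u (m + 2) - u (m + 1) + 1 / 3 * u m) (a : ℝ) (n : ℕ) :
    ∑ j : Fin 7, ![1, -6, 15, -24, 27, -18, 9] j * (((n + j : ℕ) + a) * u (n + j)) = 0 := by
  have h3 : u (n + 3) = u (n + 2) - u (n + 1) + 1 / 3 * u n := hu n
  have h4 : u (n + 4) = u (n + 3) - u (n + 2) + 1 / 3 * u (n + 1) := hu (n + 1)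
  have h5 : u (n + 5) = u (n + 4) - u (n + 3) + 1 / 3 * u (n + 2) := hu (n + 2)
  have h6 : u (n + 6) = u (n + 5) - u (n + 4) + 1 / 3 * u (n + 3) := hu (n + 3)
  norm_num [Fin.sum_univ_succ]
  linear_combination -3 * (n + a) * h3 + 9 * (n + 2 + a) * h4 - 9 * (n + 4 + a) * h5
    + 9 * (n + 6 + a) * h6

theorem sq_mul_tsum_natCast_add_two_mul
    (hu : ∀ m, u (m + 3) = u (m + 2) - u (m + 1) + 1 / 3 * u m)
    (h0 : u 0 = 1 / 4) (h1 : u 1 = 1 / 6) (h2 : u 2 = -(1 / 12)) {x : ℝ}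
    (hs : Summable fun i : ℕ => ((i : ℝ) + 2) * u i * x ^ i) :
    (3 - x * (3 - x * (3 - x))) ^ 2 * ∑' i : ℕ, ((i : ℝ) + 2) * u i * x ^ i
      = 3 / 2 * (3 - x * (3 - x)) := by
  have hgen := tsum_mul_eq_of_linear_recurrence _ (natCast_add_mul_recurrence hu 2) hs
  have h3 : u 3 = -(1 / 6) := by rw [hu 0, h0, h1, h2]; norm_num
  have h4 : u 4 = -(1 / 36) := by rw [hu 1, h1, h2, h3]; norm_num
  have h5 : u 5 = 1 / 9 := by rw [hu 2, h2, h3, h4]; norm_num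
  norm_num [Fin.sum_univ_succ, sum_range_succ, h0, h1, h2, h3, h4, h5] at hgen
  linear_combination hgen

end BakSneppen4

open BakSneppen4

theorem bs4_limit_density_series
    (c : ℕ → ℝ) (hc1 : c 1 = 1 / 4) (hc2 : c 2 = 1 / 6) (hc3 : c 3 = -(1 / 12))
    (hrec : ∀ i, 4 ≤ i → c i = c (i - 1) - c (i - 2) + (1 / 3) * c (i - 3))
    (β : ℕ → ℝ) (hβ : ∀ i, β i = ((i : ℝ) + 1) * c i) :
    ∀ x ∈ Set.Icc (0 : ℝ) 1,
      Summable (fun i : ℕ => |β (i + 1) * x ^ (i + 1)|)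
      ∧ ∑' i : ℕ, β (i + 1) * x ^ (i + 1)
          = (3 / 2) * (x * (3 - x * (3 - x))) / (3 - x * (3 - x * (3 - x))) ^ 2 := by
  rintro x ⟨hx0, hx1⟩
  set u : ℕ → ℝ := fun n => c (n + 1)
  have hu (m : ℕ) : u (m + 3) = u (m + 2) - u (m + 1) + 1 / 3 * u m := hrec (m + 4) (by omega)
  have hβu (i : ℕ) : β (i + 1) = ((i : ℝ) + 2) * u i := by rw [hβ]; push_cast; ring
  have hdom (i k : ℕ) : |((i : ℝ) + 2) * u i * x ^ k| ≤ |((i : ℝ) + 2) * u i| := by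
    rw [abs_mul, abs_pow, abs_of_nonneg hx0]
    exact mul_le_of_le_one_right (abs_nonneg _) (pow_le_one₀ hx0 hx1)
  have hsum := summable_abs_natCast_add_mul hu 2
  simp only [hβu]
  refine ⟨hsum.of_nonneg_of_le (fun _ => abs_nonneg _) fun i => hdom i (i + 1), ?_⟩
  have hgen := sq_mul_tsum_natCast_add_two_mul hu hc1 hc2 hc3
    (hsum.of_nonneg_of_le (fun _ => abs_nonneg _) fun i => hdom i i).of_abs
  have hshift : ∑' i : ℕ, ((i : ℝ) + 2) * u i * x ^ (i + 1)
      = x * ∑' i : ℕ, ((i : ℝ) + 2) * u i * x ^ i := by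
    rw [← tsum_mul_left]
    congr 1
    funext i
    ring
  have hD : 0 < 3 - x * (3 - x * (3 - x)) := by nlinarith [pow_nonneg (sub_nonneg.2 hx1) 3]
  rw [hshift, eq_div_iff (pow_pos hD 2).ne']
  linear_combination x * hgen
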